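/- arXiv:2510.26633 — 5 statements merged into one kernel-verified Lean document; each statement's English description precedes it below -/
import Mathlib

section
/- The CASMOPOLITAN kernel k(x,x') = exp((1/n) Σ_{i=1}^n ℓ_i δ(x_i, x_i')) with ℓ_i > 0 is, up to a positive multiplicative constant, equal to the ARD heat kernel on the Hamming graph: Π_{i=1}^n [(1 − e^{−β_i g_i})/(1 + (g_i−1)e^{−β_i g_i})]^{1−δ(x_i,x_i')}, for an appropriate bijective reparameterization between (ℓ_i) and (β_i), where g_i = |X_i| ≥ 2. -/
/-!
The reparameterization says exactly that `exp (ℓ i / n) = (r i)⁻¹`, where `r i` is the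
heat-kernel factor of coordinate `i` on a mismatch. Hence each factor of the exponential kernel
is `(r i)⁻¹` times the heat-kernel factor (`1` on a match, `r i` on a mismatch), and the
constant is `C = ∏ i, (r i)⁻¹`.
-/

open Finset

lemma heatKernel_ratio_pos {g β : ℝ} (hg : 1 ≤ g) (hβ : 0 < β) :
    0 < (1 - Real.exp (-β * g)) / (1 + (g - 1) * Real.exp (-β * g)) := by
  have hlt : Real.exp (-β * g) < 1 := Real.exp_lt_one_iff.mpr (by nlinarith)
  have hpos : 0 < Real.exp (-β * g) := Real.exp_pos _
  exact div_pos (by linarith) (by nlinarith)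

lemma exp_sum_mul_ite_eq_prod_inv_mul_prod_ite {ι : Type*} [Fintype ι] (p : ι → Prop)
    [DecidablePred p] {a r : ι → ℝ} (hr : ∀ i, r i ≠ 0) (har : ∀ i, Real.exp (a i) = (r i)⁻¹) :
    Real.exp (∑ i, a i * (if p i then 1 else 0)) =
      (∏ i, (r i)⁻¹) * ∏ i, (if p i then 1 else r i) := by
  rw [Real.exp_sum, ← prod_mul_distrib]
  refine prod_congr rfl fun i _ => ?_
  split_ifs
  · rw [mul_one, mul_one, har]
  · rw [mul_zero, Real.exp_zero, inv_mul_cancel₀ (hr i)]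

theorem stmt_3_general (n : ℕ)
    (X : Fin n → Type*) [∀ i, Fintype (X i)] [∀ i, DecidableEq (X i)]
    (hg : ∀ i, 2 ≤ Fintype.card (X i))
    (ℓ β : Fin n → ℝ) (hβ : ∀ i, 0 < β i)
    (hparam : ∀ i, ℓ i / n =
      -Real.log ((1 - Real.exp (-(β i) * (Fintype.card (X i) : ℝ))) /
        (1 + ((Fintype.card (X i) : ℝ) - 1) * Real.exp (-(β i) * (Fintype.card (X i) : ℝ))))) :
    ∃ C : ℝ, 0 < C ∧ ∀ x x' : ∀ i, X i,
      Real.exp ((1 / (n : ℝ)) * ∑ i, ℓ i * (if x i = x' i then 1 else 0)) =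
        C * ∏ i, (if x i = x' i then 1 else
          (1 - Real.exp (-(β i) * (Fintype.card (X i) : ℝ))) /
            (1 + ((Fintype.card (X i) : ℝ) - 1) * Real.exp (-(β i) * (Fintype.card (X i) : ℝ)))) := by
  set r : Fin n → ℝ := fun i =>
    (1 - Real.exp (-(β i) * (Fintype.card (X i) : ℝ))) /
      (1 + ((Fintype.card (X i) : ℝ) - 1) * Real.exp (-(β i) * (Fintype.card (X i) : ℝ)))
  have hr : ∀ i, 0 < r i := fun i =>
    heatKernel_ratio_pos (by exact_mod_cast (one_le_two.trans (hg i))) (hβ i)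
  have hexp : ∀ i, Real.exp (1 / (n : ℝ) * ℓ i) = (r i)⁻¹ := fun i => by
    rw [one_div_mul_eq_div, hparam i, Real.exp_neg, Real.exp_log (hr i)]
  refine ⟨∏ i, (r i)⁻¹, prod_pos fun i _ => inv_pos.mpr (hr i), fun x x' => ?_⟩
  simp_rw [mul_sum, ← mul_assoc]
  exact exp_sum_mul_ite_eq_prod_inv_mul_prod_ite _ (fun i => (hr i).ne') hexp

/-- the CASMOPOLITAN kernel equals, up to a positive multiplicative constant,
the ARD heat kernel on the Hamming graph, under the reparameterization
`ℓ_i / n = −ln((1 − e^{−β_i g_i})/(1 + (g_i − 1) e^{−β_i g_i}))`. -/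
theorem stmt_3 (n : ℕ) (hn : 0 < n)
    (X : Fin n → Type*) [∀ i, Fintype (X i)] [∀ i, DecidableEq (X i)]
    (hg : ∀ i, 2 ≤ Fintype.card (X i))
    (ℓ β : Fin n → ℝ) (hℓ : ∀ i, 0 < ℓ i) (hβ : ∀ i, 0 < β i)
    (hparam : ∀ i, ℓ i / n =
      -Real.log ((1 - Real.exp (-(β i) * (Fintype.card (X i) : ℝ))) /
        (1 + ((Fintype.card (X i) : ℝ) - 1) * Real.exp (-(β i) * (Fintype.card (X i) : ℝ))))) :
    ∃ C : ℝ, 0 < C ∧ ∀ x x' : ∀ i, X i,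
      Real.exp ((1 / (n : ℝ)) * ∑ i, ℓ i * (if x i = x' i then 1 else 0)) =
        C * ∏ i, (if x i = x' i then 1 else
          (1 - Real.exp (-(β i) * (Fintype.card (X i) : ℝ))) /
            (1 + ((Fintype.card (X i) : ℝ) - 1) * Real.exp (-(β i) * (Fintype.card (X i) : ℝ)))) :=
  stmt_3_general n X hg ℓ β hβ hparam
end

section
/- The COMBO kernel k(x,x') = Π_{i=1}^n Σ_{j=1}^{g_i} e^{−β_i λ_j^i} f_j^i(x_i) f_j^i(x_i'), where (λ_j^i, f_j^i) are orthonormal Laplacian eigenpairs of the complete graph on X_i, equals Π_{i=1}^n [(1+(g_i−1)e^{−β_i g_i})/g_i]^{δ(x_i,x_i')} [(1−e^{−β_i g_i})/g_i]^{1−δ(x_i,x_i')}, and hence is proportional to the ARD heat kernel on the Hamming graph. -/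
/-!
On the complete graph with `g` vertices the Laplacian is `g • 1 - J`, so every eigenvalue is
`0` or `g`. On `{0, g}` the function `λ ↦ exp (-β λ)` agrees with the affine function
`λ ↦ 1 + (exp (-β g) - 1) / g * λ`, hence the heat kernel `∑ⱼ exp (-β λⱼ) fⱼ fⱼᵀ` equals
`1 + (exp (-β g) - 1) / g • L`, whose entries are the two stated constants. Taking products over
the factors gives the closed form, and dividing each factor by its diagonal value gives the ARD
heat kernel on the Hamming graph up to a positive constant.
-/

open Finset Matrix Real

section OrthonormalEigenbasis

variable {Y : Type*} [Fintype Y] [DecidableEq Y] {f : Y → Y → ℝ}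

theorem sum_mul_eq_ite_of_orthonormal_rows
    (horth : ∀ j j' : Y, ∑ v, f j v * f j' v = if j = j' then 1 else 0) (a b : Y) :
    ∑ j, f j a * f j b = if a = b then 1 else 0 := by
  set F : Matrix Y Y ℝ := Matrix.of f
  have hFFt : F * Fᵀ = 1 := by
    ext j j'
    simpa [F, mul_apply, one_apply] using horth j j'
  have hFtF : Fᵀ * F = 1 := mul_eq_one_comm.mp hFFt
  simpa [F, mul_apply, one_apply] using congr_arg (fun M : Matrix Y Y ℝ => M a b) hFtF

theorem sum_eigenvalue_mul_eq_apply (L : Matrix Y Y ℝ) (lam : Y → ℝ)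
    (horth : ∀ j j' : Y, ∑ v, f j v * f j' v = if j = j' then 1 else 0)
    (heig : ∀ j, L *ᵥ f j = lam j • f j) (a b : Y) :
    ∑ j, lam j * f j a * f j b = L a b := by
  calc ∑ j, lam j * f j a * f j b = ∑ j, (L *ᵥ f j) a * f j b := by simp [heig]
    _ = ∑ v, L a v * ∑ j, f j v * f j b := by
      simp only [mulVec, dotProduct, sum_mul, mul_sum, mul_assoc]
      exact sum_comm
    _ = L a b := by simp [sum_mul_eq_ite_of_orthonormal_rows horth]

theorem sum_affine_eigenvalue_mul_eq (L : Matrix Y Y ℝ) (lam : Y → ℝ)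
    (horth : ∀ j j' : Y, ∑ v, f j v * f j' v = if j = j' then 1 else 0)
    (heig : ∀ j, L *ᵥ f j = lam j • f j) (u v : ℝ) (a b : Y) :
    ∑ j, (u + v * lam j) * f j a * f j b = u * (if a = b then 1 else 0) + v * L a b := by
  rw [← sum_mul_eq_ite_of_orthonormal_rows horth, ← sum_eigenvalue_mul_eq_apply L lam horth heig,
    mul_sum, mul_sum, ← sum_add_distrib]
  exact sum_congr rfl fun j _ => by ring

end OrthonormalEigenbasis

section CompleteGraph

variable {Y : Type*} [Fintype Y] [DecidableEq Y] {L : Matrix Y Y ℝ}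

theorem mulVec_apply_of_complete
    (hL : ∀ a b : Y, L a b = if a = b then (Fintype.card Y : ℝ) - 1 else -1) (w : Y → ℝ) (c : Y) :
    (L *ᵥ w) c = Fintype.card Y * w c - ∑ v, w v := by
  have hrow : ∀ v, L c v * w v = Fintype.card Y * (if c = v then w v else 0) - w v := by
    intro v
    rw [hL]
    split_ifs <;> ring
  simp only [mulVec, dotProduct, hrow, sum_sub_distrib, ← mul_sum, sum_ite_eq, mem_univ, if_true]

theorem eigenvalue_eq_zero_or_card_of_complete
    (hL : ∀ a b : Y, L a b = if a = b then (Fintype.card Y : ℝ) - 1 else -1)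
    {w : Y → ℝ} (hw : w ≠ 0) {μ : ℝ} (heig : L *ᵥ w = μ • w) :
    μ = 0 ∨ μ = Fintype.card Y := by
  set G : ℝ := (Fintype.card Y : ℝ)
  by_contra! hμ
  have hGμ : G - μ ≠ 0 := sub_ne_zero.mpr hμ.2.symm
  -- the eigen-equation reads `(G - μ) • w = (∑ v, w v) • 1`, so `w` is constant
  have hconst : ∀ c, w c = (∑ v, w v) / (G - μ) := by
    intro c
    have h := congrFun heig c
    rw [mulVec_apply_of_complete hL, Pi.smul_apply, smul_eq_mul] at h
    field_simp
    linarith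
  have hsum : ∑ v, w v = G * ((∑ v, w v) / (G - μ)) := by
    conv_lhs => rw [sum_congr rfl fun c _ => hconst c]
    rw [sum_const, card_univ, nsmul_eq_mul]
  have hzero : ∑ v, w v = 0 := by
    field_simp at hsum
    exact (mul_eq_zero.mp (by linear_combination -hsum : μ * ∑ v, w v = 0)).resolve_left hμ.1
  exact hw (funext fun c => by simp [hconst c, hzero])

end CompleteGraph

theorem exp_neg_mul_eq_affine_of_mem_pair (β : ℝ) {G μ : ℝ} (hG : G ≠ 0) (hμ : μ = 0 ∨ μ = G) :
    exp (-β * μ) = 1 + (exp (-β * G) - 1) / G * μ := by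
  rcases hμ with rfl | rfl
  · simp
  · field_simp
    ring

theorem sum_exp_eigenvalue_mul_of_complete {Y : Type*} [Fintype Y] [DecidableEq Y] [Nonempty Y]
    (β : ℝ) (L : Matrix Y Y ℝ)
    (hL : ∀ a b : Y, L a b = if a = b then (Fintype.card Y : ℝ) - 1 else -1)
    (f : Y → Y → ℝ) (lam : Y → ℝ)
    (horth : ∀ j j' : Y, ∑ v, f j v * f j' v = if j = j' then 1 else 0)
    (heig : ∀ j : Y, L *ᵥ f j = lam j • f j) (a b : Y) :
    ∑ j, exp (-β * lam j) * f j a * f j b =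
      if a = b then
        (1 + ((Fintype.card Y : ℝ) - 1) * exp (-β * Fintype.card Y)) / Fintype.card Y
      else (1 - exp (-β * Fintype.card Y)) / Fintype.card Y := by
  have hG : (Fintype.card Y : ℝ) ≠ 0 := by positivity
  have hf : ∀ j, f j ≠ 0 := fun j hj => by simpa [hj] using horth j j
  have hexp : ∀ j, exp (-β * lam j) = 1 + (exp (-β * Fintype.card Y) - 1) / Fintype.card Y * lam j :=
    fun j => exp_neg_mul_eq_affine_of_mem_pair β hG
      (eigenvalue_eq_zero_or_card_of_complete hL (hf j) (heig j))
  simp only [hexp, sum_affine_eigenvalue_mul_eq L lam horth heig, hL]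
  split_ifs
  · field_simp
    ring
  · field_simp
    ring

theorem stmt_4_general (n : ℕ) (X : Fin n → Type*) [∀ i, Fintype (X i)] [∀ i, DecidableEq (X i)]
    (hg : ∀ i, 2 ≤ Fintype.card (X i))
    (β : Fin n → ℝ)
    (L : ∀ i, Matrix (X i) (X i) ℝ)
    (hL : ∀ i (a b : X i), L i a b = if a = b then (Fintype.card (X i) : ℝ) - 1 else -1)
    (f : ∀ i, X i → X i → ℝ) (lam : ∀ i, X i → ℝ)
    (horth : ∀ i (j j' : X i), ∑ v, f i j v * f i j' v = if j = j' then 1 else 0)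
    (heig : ∀ i (j : X i), (L i).mulVec (f i j) = lam i j • f i j) :
    (∀ x x' : ∀ i, X i,
      ∏ i, (∑ j, Real.exp (-(β i) * lam i j) * f i j (x i) * f i j (x' i)) =
        ∏ i, (if x i = x' i then
            (1 + ((Fintype.card (X i) : ℝ) - 1) * Real.exp (-(β i) * (Fintype.card (X i) : ℝ)))
              / (Fintype.card (X i) : ℝ)
          else (1 - Real.exp (-(β i) * (Fintype.card (X i) : ℝ))) / (Fintype.card (X i) : ℝ))) ∧
    (∃ C : ℝ, 0 < C ∧ ∀ x x' : ∀ i, X i,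
      ∏ i, (∑ j, Real.exp (-(β i) * lam i j) * f i j (x i) * f i j (x' i)) =
        C * ∏ i, (if x i = x' i then 1 else
          (1 - Real.exp (-(β i) * (Fintype.card (X i) : ℝ))) /
            (1 + ((Fintype.card (X i) : ℝ) - 1) * Real.exp (-(β i) * (Fintype.card (X i) : ℝ))))) := by
  have hne : ∀ i, Nonempty (X i) := fun i => Fintype.card_pos_iff.mp (by have := hg i; omega)
  have hclosed := fun (x x' : ∀ i, X i) => prod_congr (s₁ := univ) rfl fun i _ =>
    sum_exp_eigenvalue_mul_of_complete (β i) (L i) (hL i) (f i) (lam i) (horth i) (heig i)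
      (x i) (x' i)
  have hdiag : ∀ i, 0 < 1 + ((Fintype.card (X i) : ℝ) - 1) *
      exp (-(β i) * (Fintype.card (X i) : ℝ)) := fun i => by
    have : (1 : ℝ) ≤ Fintype.card (X i) := by exact_mod_cast (hg i).trans' (by norm_num)
    positivity
  refine ⟨hclosed, ∏ i, (1 + ((Fintype.card (X i) : ℝ) - 1) *
      exp (-(β i) * (Fintype.card (X i) : ℝ))) / (Fintype.card (X i) : ℝ),
    prod_pos fun i _ => div_pos (hdiag i) (by have := hne i; positivity), fun x x' => ?_⟩
  rw [hclosed x x', ← prod_mul_distrib]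
  refine prod_congr rfl fun i _ => ?_
  split_ifs
  · rw [mul_one]
  · rw [div_mul_div_comm, mul_comm (1 + _), mul_div_mul_right _ _ (hdiag i).ne']

/-- the COMBO kernel (product over factors of heat kernels on complete graphs,
built from orthonormal Laplacian eigenpairs) has the stated closed form, and hence is
proportional to the ARD heat kernel on the Hamming graph. -/
theorem stmt_4 (n : ℕ) (X : Fin n → Type*) [∀ i, Fintype (X i)] [∀ i, DecidableEq (X i)]
    (hg : ∀ i, 2 ≤ Fintype.card (X i))
    (β : Fin n → ℝ) (hβ : ∀ i, 0 < β i)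
    (L : ∀ i, Matrix (X i) (X i) ℝ)
    (hL : ∀ i (a b : X i), L i a b = if a = b then (Fintype.card (X i) : ℝ) - 1 else -1)
    (f : ∀ i, X i → X i → ℝ) (lam : ∀ i, X i → ℝ)
    (horth : ∀ i (j j' : X i), ∑ v, f i j v * f i j' v = if j = j' then 1 else 0)
    (heig : ∀ i (j : X i), (L i).mulVec (f i j) = lam i j • f i j) :
    (∀ x x' : ∀ i, X i,
      ∏ i, (∑ j, Real.exp (-(β i) * lam i j) * f i j (x i) * f i j (x' i)) =
        ∏ i, (if x i = x' i then
            (1 + ((Fintype.card (X i) : ℝ) - 1) * Real.exp (-(β i) * (Fintype.card (X i) : ℝ)))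
              / (Fintype.card (X i) : ℝ)
          else (1 - Real.exp (-(β i) * (Fintype.card (X i) : ℝ))) / (Fintype.card (X i) : ℝ))) ∧
    (∃ C : ℝ, 0 < C ∧ ∀ x x' : ∀ i, X i,
      ∏ i, (∑ j, Real.exp (-(β i) * lam i j) * f i j (x i) * f i j (x' i)) =
        C * ∏ i, (if x i = x' i then 1 else
          (1 - Real.exp (-(β i) * (Fintype.card (X i) : ℝ))) /
            (1 + ((Fintype.card (X i) : ℝ) - 1) * Real.exp (-(β i) * (Fintype.card (X i) : ℝ))))) :=
  stmt_4_general n X hg β L hL f lam horth heig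
end

section
/- Let k : ℝ^n × ℝ^n → ℝ be symmetric positive semi-definite of the form k(z,z') = 𝕜(‖z − z'‖₂) for some 𝕜 : ℝ → ℝ. Then the kernel k*(x,x') = 𝕜(√(h(x,x'))) on a product of finite sets X = X_1 × ... × X_n, where h is the Hamming distance, is symmetric positive semi-definite. -/
/-!
Encode `x ∈ ∏ X_i` by its one-hot vector in `ℝ^(Σ |X_i|)`, scaled by `1/√2`. Two encodings
differ exactly in the two slots `(i, x i)` and `(i, x' i)` of each coordinate `i` where
`x i ≠ x' i`, so their squared Euclidean distance is the Hamming distance `h(x, x')`. Hence the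
Gram matrix of `k*` at `x_1, …, x_m` is the Gram matrix of `k` at the encoded points.
-/

open Finset

lemma sum_sq_sub_ite_eq {α : Type*} [Fintype α] [DecidableEq α] (a b : α) :
    ∑ v : α, ((if a = v then 1 else 0) - (if b = v then 1 else 0) : ℝ) ^ 2
      = if a = b then 0 else 2 := by
  split_ifs with hab
  · simp [hab]
  · have hsq : ∀ v, ((if a = v then 1 else 0) - (if b = v then 1 else 0) : ℝ) ^ 2
        = (if a = v then 1 else 0) + (if b = v then 1 else 0) := by
      intro v
      by_cases hav : a = v <;> by_cases hbv : b = v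
      · exact absurd (hav.trans hbv.symm) hab
      all_goals simp [hav, hbv]
    rw [sum_congr rfl fun v _ => hsq v, sum_add_distrib]
    norm_num

section OneHot

variable {ι : Type*} [Fintype ι] {X : ι → Type*} [∀ i, Fintype (X i)] [∀ i, DecidableEq (X i)]

def oneHot (x : ∀ i, X i) : (Σ i, X i) → ℝ :=
  fun p => if x p.1 = p.2 then 1 else 0

lemma sum_sq_sub_oneHot (x y : ∀ i, X i) :
    ∑ p, (oneHot x p - oneHot y p) ^ 2 = 2 * #{i | x i ≠ y i} := by
  rw [← univ_sigma_univ, sum_sigma, card_filter]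
  simp only [oneHot, sum_sq_sub_ite_eq]
  push_cast
  rw [mul_sum]
  refine sum_congr rfl fun i _ => ?_
  split_ifs <;> simp_all

end OneHot

/-- if `k(z,z') = 𝕜(‖z − z'‖₂)` is a symmetric positive semi-definite kernel on
the Euclidean space of one-hot encodings (dimension `s = Σ |X_i|`), then
`k*(x,x') = 𝕜(√h(x,x'))` with `h` the Hamming distance is positive semi-definite on
`X = X_1 × ⋯ × X_n`. -/
theorem stmt_5 (n : ℕ) (X : Fin n → Type*) [∀ i, Fintype (X i)] [∀ i, DecidableEq (X i)]
    (s : ℕ) (hs : s = ∑ i, Fintype.card (X i))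
    (𝕜 : ℝ → ℝ)
    (hPSD : ∀ (m : ℕ) (z : Fin m → (Fin s → ℝ)) (c : Fin m → ℝ),
      0 ≤ ∑ a, ∑ b, c a * c b * 𝕜 (Real.sqrt (∑ j, (z a j - z b j) ^ 2))) :
    ∀ (m : ℕ) (x : Fin m → (∀ i, X i)) (c : Fin m → ℝ),
      0 ≤ ∑ a, ∑ b, c a * c b *
        𝕜 (Real.sqrt ((Finset.univ.filter (fun i => x a i ≠ x b i)).card)) := by
  intro m x c
  let e : (Σ i, X i) ≃ Fin s := Fintype.equivFinOfCardEq (by simp [Fintype.card_sigma, hs])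
  let z : Fin m → Fin s → ℝ := fun a j => (√2)⁻¹ * oneHot (x a) (e.symm j)
  have hdist : ∀ a b, ∑ j, (z a j - z b j) ^ 2 = #{i | x a i ≠ x b i} := by
    intro a b
    simp only [z, ← mul_sub, mul_pow, ← mul_sum,
      e.symm.sum_comp fun p => (oneHot (x a) p - oneHot (x b) p) ^ 2, sum_sq_sub_oneHot]
    rw [inv_pow, Real.sq_sqrt zero_le_two, ← mul_assoc, inv_mul_cancel₀ two_ne_zero, one_mul]
  simpa only [hdist] using hPSD m z c
end

section
/- Let G be the Cartesian product of n complete graphs each of size g. Every kernel k on X = {0,...,g−1}^n that is a function of the Hamming distance is a Φ-kernel on G: the product eigenfunctions f_{j_1,...,j_n}(x) = Π_i f_{j_i}(x_i) are eigenfunctions of the covariance operator of k, and the eigenvalue depends only on the number of indices i with j_i corresponding to the constant factor eigenfunction. -/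
/-- on a product of `n` complete graphs of equal size `g`, every kernel that is
a function of the Hamming distance has the product eigenfunctions
`F_{j}(x) = Π_i f_{j_i}(x_i)` as eigenfunctions of its covariance operator, with eigenvalue
depending only on the number of indices `i` where `j_i` is the constant factor eigenfunction;
hence such a kernel is a Φ-kernel. -/
theorem stmt_10 (n g : ℕ) (hg : 2 ≤ g)
    (k : (Fin n → Fin g) → (Fin n → Fin g) → ℝ)
    (F : ℕ → ℝ)
    (hk : ∀ x x' : Fin n → Fin g,
      k x x' = F ((Finset.univ.filter (fun i => x i ≠ x' i)).card))
    (f : Fin g → Fin g → ℝ)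
    (j0 : Fin g)
    (hconst : ∀ v, f j0 v = 1 / Real.sqrt g)
    (horth : ∀ j j', ∑ v, f j v * f j' v = if j = j' then 1 else 0)
    (hzero : ∀ j, j ≠ j0 → ∑ v, f j v = 0) :
    ∃ M : ℕ → ℝ, ∀ j : Fin n → Fin g, ∀ x : Fin n → Fin g,
      ∑ x' : Fin n → Fin g, k x x' * ∏ i, f (j i) (x' i) =
        M ((Finset.univ.filter (fun i => j i = j0)).card) * ∏ i, f (j i) (x i) := by
  classical
  refine ⟨fun c => ∑ s ∈ Finset.range (c + 1), (c.choose s : ℝ) *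
      ∑ t ∈ Finset.range (n - c + 1),
        ((n - c).choose t : ℝ) * (((g : ℝ) - 1) ^ s * (-1 : ℝ) ^ t * F (s + t)), ?_⟩
  intro j x
  set C : Finset (Fin n) := Finset.univ.filter (fun i => j i = j0) with hC
  -- the coefficient of each coordinate
  set c : Fin n → ℝ := fun i => if j i = j0 then (g : ℝ) - 1 else -1 with hc
  -- Step 0: per-coordinate sums
  have hsum_all : ∀ i : Fin n, ∑ v, f (j i) v =
      if j i = j0 then (g : ℝ) * (1 / Real.sqrt g) else 0 := by
    intro i
    by_cases h : j i = j0
    · simp only [h, if_pos rfl]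
      rw [Finset.sum_congr rfl (fun v _ => hconst v)]
      simp [mul_comm]
    · simp [h, hzero _ h]
  have hsum_erase : ∀ i : Fin n, ∑ v ∈ Finset.univ.erase (x i), f (j i) v =
      c i * f (j i) (x i) := by
    intro i
    rw [Finset.sum_erase_eq_sub (Finset.mem_univ _), hsum_all i]
    by_cases h : j i = j0
    · simp [hc, h, hconst]
      ring
    · simp [hc, h]
  -- Step 1: partition sum over x' by the set of differing coordinates
  have step1 : ∑ x' : Fin n → Fin g, k x x' * ∏ i, f (j i) (x' i) =
      ∑ T : Finset (Fin n), F T.card * ((∏ i ∈ T, c i) * ∏ i, f (j i) (x i)) := by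
    rw [← Finset.sum_fiberwise Finset.univ
      (fun x' : Fin n → Fin g => Finset.univ.filter (fun i => x i ≠ x' i))
      (fun x' => k x x' * ∏ i, f (j i) (x' i))]
    refine Finset.sum_congr rfl fun T _ => ?_
    have hfib : Finset.univ.filter
        (fun x' : Fin n → Fin g => Finset.univ.filter (fun i => x i ≠ x' i) = T) =
        Fintype.piFinset (fun i => if i ∈ T then Finset.univ.erase (x i) else {x i}) := by
      ext x'
      simp only [Finset.mem_filter, Finset.mem_univ, true_and, Fintype.mem_piFinset,
        Finset.ext_iff, Finset.mem_filter, Finset.mem_univ, true_and]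
      constructor
      · intro h i
        by_cases hi : i ∈ T
        · have := (h i).2 hi
          simp [hi, Ne.symm this]
        · by_contra hne
          exact hi ((h i).1 (fun he => hne (by simp [hi, he])))
      · intro h i
        specialize h i
        by_cases hi : i ∈ T
        · simp only [hi, if_true, Finset.mem_erase, Finset.mem_univ, and_true] at h
          exact ⟨fun _ => hi, fun _ => Ne.symm h⟩
        · simp only [hi, if_false, Finset.mem_singleton] at h
          exact ⟨fun hne => absurd h.symm hne, fun hiT => absurd hiT hi⟩
    rw [hfib]
    have hval : ∀ x' ∈ Fintype.piFinset
        (fun i => if i ∈ T then Finset.univ.erase (x i) else {x i}),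
        k x x' * ∏ i, f (j i) (x' i) = F T.card * ∏ i, f (j i) (x' i) := by
      intro x' hx'
      congr 1
      rw [hk x x']
      congr 2
      ext i
      simp only [Finset.mem_filter, Finset.mem_univ, true_and]
      rw [Fintype.mem_piFinset] at hx'
      specialize hx' i
      by_cases hi : i ∈ T <;> simp [hi] at hx' ⊢
      · exact Ne.symm hx'
      · exact hx'.symm
    rw [Finset.sum_congr rfl hval, ← Finset.mul_sum,
      ← Finset.prod_univ_sum (fun i => if i ∈ T then Finset.univ.erase (x i) else {x i})
        (fun i v => f (j i) v)]
    congr 1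
    have : ∀ i : Fin n,
        (∑ v ∈ (if i ∈ T then Finset.univ.erase (x i) else {x i}), f (j i) v) =
        (if i ∈ T then c i else 1) * f (j i) (x i) := by
      intro i
      by_cases hi : i ∈ T
      · simp only [hi, if_pos rfl]; exact hsum_erase i
      · simp [hi]
    rw [Finset.prod_congr rfl (fun i _ => this i), Finset.prod_mul_distrib,
      Finset.prod_ite_mem, Finset.univ_inter]
  rw [step1]
  simp only [← mul_assoc]
  rw [← Finset.sum_mul]
  congr 1
  -- Step 2: the sum over subsets depends only on the cardinality of C
  have hsplit : ∑ T : Finset (Fin n), F T.card * ∏ i ∈ T, c i =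
      ∑ A ∈ C.powerset, ∑ B ∈ Cᶜ.powerset,
        F (A.card + B.card) * (((g : ℝ) - 1) ^ A.card * (-1 : ℝ) ^ B.card) := by
    rw [← Finset.sum_product']
    refine Finset.sum_nbij' (fun T => (T ∩ C, T \ C)) (fun p => p.1 ∪ p.2) ?_ ?_ ?_ ?_ ?_
    · intro T _
      simp only [Finset.mem_product, Finset.mem_powerset]
      exact ⟨Finset.inter_subset_right, fun a ha => by
        simp only [Finset.mem_compl]; exact (Finset.mem_sdiff.1 ha).2⟩
    · intro p _; exact Finset.mem_univ _
    · intro T _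
      show T ∩ C ∪ T \ C = T
      rw [Finset.union_comm]
      exact Finset.sdiff_union_inter T C
    · rintro ⟨A, B⟩ hp
      simp only [Finset.mem_product, Finset.mem_powerset] at hp
      obtain ⟨hA, hB⟩ := hp
      have hABdisj : Disjoint B C := by
        rw [Finset.disjoint_left]
        intro a haB haC
        exact (Finset.mem_compl.1 (hB haB)) haC
      have h1 : (A ∪ B) ∩ C = A := by
        rw [Finset.union_inter_distrib_right, Finset.inter_eq_left.2 hA,
          (Finset.disjoint_iff_inter_eq_empty.1 hABdisj), Finset.union_empty]
      have h2 : (A ∪ B) \ C = B := by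
        rw [Finset.union_sdiff_distrib, Finset.sdiff_eq_empty_iff_subset.2 hA,
          Finset.sdiff_eq_self_of_disjoint hABdisj, Finset.empty_union]
      simp [h1, h2]
    · intro T _
      have hdisj : Disjoint (T ∩ C) (T \ C) := by
        rw [Finset.disjoint_left]
        intro a ha hb
        exact (Finset.mem_sdiff.1 hb).2 (Finset.mem_inter.1 ha).2
      have hcard : (T ∩ C).card + (T \ C).card = T.card :=
        Finset.card_inter_add_card_sdiff T C
      have hprod : ∏ i ∈ T, c i =
          ((g : ℝ) - 1) ^ (T ∩ C).card * (-1 : ℝ) ^ (T \ C).card := by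
        have hrec : T ∩ C ∪ T \ C = T := by
          rw [Finset.union_comm]; exact Finset.sdiff_union_inter T C
        rw [← hrec, Finset.prod_union hdisj]
        congr 1
        · have h1 : ∀ i ∈ T ∩ C, c i = (g : ℝ) - 1 := by
            intro i hi
            have : j i = j0 := by
              have := (Finset.mem_inter.1 hi).2
              simpa [hC] using this
            simp [hc, this]
          rw [Finset.prod_congr rfl h1, Finset.prod_const, hrec]
        · have h2 : ∀ i ∈ T \ C, c i = (-1 : ℝ) := by
            intro i hi
            have : ¬ j i = j0 := by
              have := (Finset.mem_sdiff.1 hi).2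
              simpa [hC] using this
            simp [hc, this]
          rw [Finset.prod_congr rfl h2, Finset.prod_const, hrec]
      rw [hcard, hprod]
  rw [hsplit]
  have hCc : Cᶜ.card = n - C.card := by
    rw [Finset.card_compl, Fintype.card_fin]
  have inner : ∀ A : Finset (Fin n),
      ∑ B ∈ Cᶜ.powerset,
        F (A.card + B.card) * (((g : ℝ) - 1) ^ A.card * (-1 : ℝ) ^ B.card) =
      ∑ t ∈ Finset.range (n - C.card + 1),
        ((n - C.card).choose t : ℝ) *
          (((g : ℝ) - 1) ^ A.card * (-1 : ℝ) ^ t * F (A.card + t)) := by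
    intro A
    rw [Finset.sum_powerset_apply_card
      (fun m => F (A.card + m) * (((g : ℝ) - 1) ^ A.card * (-1 : ℝ) ^ m)), hCc]
    refine Finset.sum_congr rfl fun t _ => ?_
    rw [nsmul_eq_mul]
    ring
  rw [Finset.sum_congr rfl (fun A _ => inner A),
    Finset.sum_powerset_apply_card
      (fun m => ∑ t ∈ Finset.range (n - C.card + 1),
        ((n - C.card).choose t : ℝ) *
          (((g : ℝ) - 1) ^ m * (-1 : ℝ) ^ t * F (m + t)))]
  refine Finset.sum_congr rfl fun s _ => ?_
  rw [nsmul_eq_mul]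
  congr 1
  exact Finset.sum_congr rfl fun t _ => by ring
end

section
/- On the Hamming graph G = K_2 □ K_2 □ K_4 (Cartesian product of complete graphs of sizes 2, 2, 4), the Laplacian has exactly 5 distinct eigenvalues (0, 2, 4, 6, 8), so every Φ-kernel on G has at most 5 distinct Gram-matrix eigenvalues; yet the Hamming-distance kernel with values k = 10, 6, 4, 3 at Hamming distances 0, 1, 2, 3 respectively has 6 distinct eigenvalues (77, 15, 9, 5, 3, 1). Hence for Hamming graphs with unequal factor sizes, the class of Hamming kernels strictly contains the class of Φ-kernels. -/
/-!
The `±1`-valued characters of `(ZMod 2)⁴` are mutually orthogonal and are eigenvectors of every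
matrix depending only on the Hamming distance, so the spectra of `L11` and `K11` are the
character sums of their rows. A Φ-kernel
`K = ∑ⱼ Φ(λⱼ) fⱼ fⱼᵀ` over an orthonormal eigenbasis `(fⱼ)` of `L11` has spectrum
`{Φ(λⱼ)} ⊆ Φ '' spec L11`, a set of at most 5 values, whereas `K11` has 6 eigenvalues.
-/

/-- Hamming distance on `{0,1} × {0,1} × {0,1,2,3}`. -/
def ham11 (x y : Fin 2 × Fin 2 × Fin 4) : ℕ :=
  (if x.1 = y.1 then 0 else 1) + (if x.2.1 = y.2.1 then 0 else 1) +
    (if x.2.2 = y.2.2 then 0 else 1)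

/-- Laplacian of the Hamming graph `K_2 □ K_2 □ K_4` (every vertex has degree 5). -/
def L11 : Matrix (Fin 2 × Fin 2 × Fin 4) (Fin 2 × Fin 2 × Fin 4) ℝ :=
  fun x y => if x = y then 5 else if ham11 x y = 1 then -1 else 0

/-- The Hamming-distance kernel with values 10, 6, 4, 3 at distances 0, 1, 2, 3. -/
def K11 : Matrix (Fin 2 × Fin 2 × Fin 4) (Fin 2 × Fin 2 × Fin 4) ℝ :=
  fun x y => if ham11 x y = 0 then 10 else if ham11 x y = 1 then 6
    else if ham11 x y = 2 then 4 else 3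

open Matrix

section Eigenvalues

variable {R n : Type*} [Fintype n]

def eigenvalueSet [CommRing R] (M : Matrix n n R) : Set R :=
  {μ | ∃ v, v ≠ 0 ∧ M *ᵥ v = μ • v}

variable [DecidableEq n]

theorem eigenvalueSet_mul_diagonal_mul [CommRing R] [IsDomain R] {F G : Matrix n n R}
    (hFG : F * G = 1) (d : n → R) : eigenvalueSet (G * diagonal d * F) = Set.range d := by
  have hFG_mulVec (w : n → R) : F *ᵥ (G *ᵥ w) = w := by rw [mulVec_mulVec, hFG, one_mulVec]
  have hGF_mulVec (w : n → R) : G *ᵥ (F *ᵥ w) = w := by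
    rw [mulVec_mulVec, mul_eq_one_comm.mp hFG, one_mulVec]
  have hconj (w : n → R) : F *ᵥ ((G * diagonal d * F) *ᵥ w) = diagonal d *ᵥ (F *ᵥ w) := by
    rw [← mulVec_mulVec, ← mulVec_mulVec, hFG_mulVec]
  ext μ
  constructor
  · rintro ⟨v, hv, hMv⟩
    obtain ⟨j, hj⟩ := Function.ne_iff.mp fun h : F *ᵥ v = 0 =>
      hv (by rw [← hGF_mulVec v, h, mulVec_zero])
    have hdiag := congrFun (hconj v) j
    rw [hMv, mulVec_smul, mulVec_diagonal] at hdiag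
    exact ⟨j, mul_right_cancel₀ hj hdiag.symm⟩
  · rintro ⟨j, rfl⟩
    refine ⟨G *ᵥ Pi.single j 1, fun h => ?_, ?_⟩
    · have h1 : (Pi.single j 1 : n → R) = 0 := by
        rw [← hFG_mulVec (Pi.single j 1), h, mulVec_zero]
      simpa using congrFun h1 j
    · rw [← hGF_mulVec ((G * diagonal d * F) *ᵥ _), hconj, hFG_mulVec, diagonal_mulVec_single,
        ← smul_eq_mul, Pi.single_smul, mulVec_smul]

theorem eigenvalueSet_eq_range_of_orthonormal [CommRing R] [IsDomain R] {K : Matrix n n R}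
    {f : n → n → R} {d : n → R} (hf : ∀ j j', ∑ v, f j v * f j' v = if j = j' then 1 else 0)
    (hK : ∀ x x', K x x' = ∑ j, d j * f j x * f j x') : eigenvalueSet K = Set.range d := by
  have hF : of f * (of f)ᵀ = 1 := by ext j j'; simp [mul_apply, one_apply, hf]
  convert eigenvalueSet_mul_diagonal_mul hF d
  ext x x'
  rw [hK, mul_apply]
  simp only [mul_diagonal, transpose_apply, of_apply]
  exact Finset.sum_congr rfl fun j _ => by ring

theorem eigenvalueSet_subset_image [CommRing R] [IsDomain R] {K L : Matrix n n R} {Φ : R → R}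
    {f : n → n → R} {lam : n → R} (hf : ∀ j j', ∑ v, f j v * f j' v = if j = j' then 1 else 0)
    (hL : ∀ j, L *ᵥ f j = lam j • f j) (hK : ∀ x x', K x x' = ∑ j, Φ (lam j) * f j x * f j x') :
    eigenvalueSet K ⊆ Φ '' eigenvalueSet L := by
  rw [eigenvalueSet_eq_range_of_orthonormal hf hK]
  rintro _ ⟨j, rfl⟩
  refine ⟨lam j, ⟨f j, fun h => ?_, hL j⟩, rfl⟩
  simpa [h] using hf j j

theorem eigenvalueSet_eq_range_of_mul_transpose [Field R] {M C : Matrix n n R} {c : R}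
    {d : n → R} (hc : c ≠ 0) (hC : C * Cᵀ = c • 1) (hM : c • M = Cᵀ * diagonal d * C) :
    eigenvalueSet M = Set.range d := by
  have hFG : (c⁻¹ • C) * Cᵀ = 1 := by rw [smul_mul, hC, smul_smul, inv_mul_cancel₀ hc, one_smul]
  convert eigenvalueSet_mul_diagonal_mul hFG d
  rw [Matrix.mul_smul, ← hM, smul_smul, inv_mul_cancel₀ hc, one_smul]

theorem eigenvalueSet_map_intCast [Field R] [CharZero R] {M C : Matrix n n ℤ} {c : ℤ}
    {d : n → ℤ} (hc : c ≠ 0) (hC : C * Cᵀ = c • 1) (hM : c • M = Cᵀ * diagonal d * C) :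
    eigenvalueSet (M.map (Int.cast : ℤ → R)) = Int.cast '' ↑(Finset.univ.image d) := by
  have hC' : C.map (Int.cast : ℤ → R) * (C.map Int.cast)ᵀ = (c : R) • 1 := by
    ext i j
    simpa [mul_apply, one_apply, apply_ite] using congrArg (Int.cast : ℤ → R) (congrFun₂ hC i j)
  have hM' : (c : R) • M.map Int.cast =
      (C.map Int.cast)ᵀ * diagonal (fun j => (d j : R)) * C.map Int.cast := by
    ext i j
    simpa [mul_apply, diagonal_apply, apply_ite] using
      congrArg (Int.cast : ℤ → R) (congrFun₂ hM i j)
  rw [eigenvalueSet_eq_range_of_mul_transpose (Int.cast_ne_zero.mpr hc) hC' hM',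
    Finset.coe_image, Finset.coe_univ, Set.image_univ, ← Set.range_comp]
  rfl

end Eigenvalues

abbrev Vertex := Fin 2 × Fin 2 × Fin 4

/- `Fin 4` is read as `(ZMod 2)²` through its binary digits, so that the characters of the
vertex group are `±1`-valued. -/
def characterTable : Matrix Vertex Vertex ℤ :=
  of fun j x => (-1) ^ (j.1.val * x.1.val + j.2.1.val * x.2.1.val +
    (j.2.2.val % 2 * (x.2.2.val % 2) + j.2.2.val / 2 * (x.2.2.val / 2)))

def laplacianInt : Matrix Vertex Vertex ℤ :=
  of fun x y => if x = y then 5 else if ham11 x y = 1 then -1 else 0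

def kernelInt : Matrix Vertex Vertex ℤ :=
  of fun x y => if ham11 x y = 0 then 10 else if ham11 x y = 1 then 6
    else if ham11 x y = 2 then 4 else 3

def characterSum (M : Matrix Vertex Vertex ℤ) (j : Vertex) : ℤ :=
  ∑ y, M 0 y * characterTable j y

theorem characterTable_mul_transpose : characterTable * characterTableᵀ = (16 : ℤ) • 1 := by
  decide

theorem sixteen_smul_laplacianInt : (16 : ℤ) • laplacianInt =
    characterTableᵀ * diagonal (characterSum laplacianInt) * characterTable := by
  decide

theorem sixteen_smul_kernelInt : (16 : ℤ) • kernelInt =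
    characterTableᵀ * diagonal (characterSum kernelInt) * characterTable := by
  decide

theorem image_characterSum_laplacianInt :
    Finset.univ.image (characterSum laplacianInt) = {0, 2, 4, 6, 8} := by
  decide

theorem image_characterSum_kernelInt :
    Finset.univ.image (characterSum kernelInt) = {77, 15, 9, 5, 3, 1} := by
  decide

theorem L11_eq_map : L11 = laplacianInt.map Int.cast := by
  ext x y
  simp only [L11, laplacianInt, map_apply, of_apply]
  split_ifs <;> norm_num

theorem K11_eq_map : K11 = kernelInt.map Int.cast := by
  ext x y
  simp only [K11, kernelInt, map_apply, of_apply]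
  split_ifs <;> norm_num

theorem eigenvalueSet_L11 : eigenvalueSet L11 = {0, 2, 4, 6, 8} := by
  rw [L11_eq_map, eigenvalueSet_map_intCast (by norm_num) characterTable_mul_transpose
    sixteen_smul_laplacianInt, image_characterSum_laplacianInt]
  simp [Set.image_insert_eq]

theorem eigenvalueSet_K11 : eigenvalueSet K11 = {77, 15, 9, 5, 3, 1} := by
  rw [K11_eq_map, eigenvalueSet_map_intCast (by norm_num) characterTable_mul_transpose
    sixteen_smul_kernelInt, image_characterSum_kernelInt]
  simp [Set.image_insert_eq]

/-- the Laplacian of `K_2 □ K_2 □ K_4` has exactly the 5 distinct eigenvalues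
0, 2, 4, 6, 8, while the Hamming kernel `K11` has the 6 distinct eigenvalues
77, 15, 9, 5, 3, 1; hence `K11` is a Hamming kernel that is not a Φ-kernel, so for unequal
factor sizes the Hamming kernels strictly contain the Φ-kernels. -/
theorem stmt_11 :
    (∀ μ : ℝ, (∃ v : Fin 2 × Fin 2 × Fin 4 → ℝ, v ≠ 0 ∧ L11.mulVec v = μ • v) ↔
      μ ∈ ({0, 2, 4, 6, 8} : Set ℝ)) ∧
    (∀ μ : ℝ, (∃ v : Fin 2 × Fin 2 × Fin 4 → ℝ, v ≠ 0 ∧ K11.mulVec v = μ • v) ↔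
      μ ∈ ({77, 15, 9, 5, 3, 1} : Set ℝ)) ∧
    ¬ ∃ (Φ : ℝ → ℝ) (f : Fin 2 × Fin 2 × Fin 4 → Fin 2 × Fin 2 × Fin 4 → ℝ)
        (lam : Fin 2 × Fin 2 × Fin 4 → ℝ),
        (∀ t, 0 ≤ Φ t) ∧
        (∀ j j', ∑ v, f j v * f j' v = if j = j' then 1 else 0) ∧
        (∀ j, L11.mulVec (f j) = lam j • f j) ∧
        (∀ x x', K11 x x' = ∑ j, Φ (lam j) * f j x * f j x') := by
  refine ⟨Set.ext_iff.mp eigenvalueSet_L11, Set.ext_iff.mp eigenvalueSet_K11, ?_⟩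
  rintro ⟨Φ, f, lam, -, hf, hL, hK⟩
  have hsub := eigenvalueSet_subset_image hf hL hK
  rw [eigenvalueSet_L11, eigenvalueSet_K11] at hsub
  have hcard := (Set.ncard_le_ncard hsub ((Set.toFinite _).image Φ)).trans
    (Set.ncard_image_le (Set.toFinite _))
  simp [Set.ncard_insert_of_notMem] at hcard
end
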